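/- arXiv:2602.14587 — 8 statements merged into one kernel-verified Lean document; each statement's English description precedes it below -/
import Mathlib

section
/- Let λ be a σ-finite measure on a measurable space A, let α > 0, and let q : A → ℝ be bounded measurable with Z := ∫_A exp(q(a)/α) dλ(a) satisfying 0 < Z < ∞. Let p : A → [0,∞) be measurable with ∫_A p dλ = 1 and ∫_A p · |log p| dλ < ∞ (with the convention 0 · log 0 = 0). Then α · log Z − α · ∫_A p(a) · log( p(a) · Z · exp(−q(a)/α) ) dλ(a) = ∫_A ( q(a) − α · log p(a) ) · p(a) dλ(a), where the integral ∫_A p(a) · log( p(a) · Z · exp(−q(a)/α) ) dλ(a) is the Kullback–Leibler divergence KL(π ‖ π_q) of the probability measure π := λ.withDensity p from the Boltzmann measure π_q := λ.withDensity( exp(q/α)/Z ). -/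
open MeasureTheory

theorem stmt3 {A : Type*} [MeasurableSpace A] (lam : Measure A) [SigmaFinite lam]
    (α : ℝ) (hα : 0 < α)
    (q : A → ℝ) (hq : Measurable q) (hqb : ∃ C : ℝ, ∀ a, |q a| ≤ C)
    (hZint : Integrable (fun a => Real.exp (q a / α)) lam)
    (hZpos : 0 < ∫ a, Real.exp (q a / α) ∂lam)
    (p : A → ℝ) (hp : Measurable p) (hp0 : ∀ a, 0 ≤ p a)
    (hpint : Integrable p lam) (hp1 : ∫ a, p a ∂lam = 1)
    (hplog : Integrable (fun a => p a * |Real.log (p a)|) lam) :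
    α * Real.log (∫ a, Real.exp (q a / α) ∂lam)
      - α * ∫ a, p a *
          Real.log (p a * (∫ b, Real.exp (q b / α) ∂lam) * Real.exp (-q a / α)) ∂lam
      = ∫ a, (q a - α * Real.log (p a)) * p a ∂lam := by
  set Z : ℝ := ∫ a, Real.exp (q a / α) ∂lam with hZ
  -- integrability facts
  have hmeas_plog : Measurable (fun a => p a * Real.log (p a)) :=
    hp.mul (Real.measurable_log.comp hp)
  have hint1 : Integrable (fun a => p a * Real.log (p a)) lam := by
    have h : (fun a => p a * |Real.log (p a)|) = fun a => |p a * Real.log (p a)| := by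
      funext a
      rw [abs_mul, abs_of_nonneg (hp0 a)]
    rw [h] at hplog
    simp only [← Real.norm_eq_abs] at hplog
    exact (integrable_norm_iff hmeas_plog.aestronglyMeasurable).mp hplog
  have hint2 : Integrable (fun a => q a * p a) lam :=
    hpint.bdd_mul (c := hqb.choose) hq.aestronglyMeasurable (by
      exact Filter.Eventually.of_forall fun a => by simpa using hqb.choose_spec a)
  have hint2' : Integrable (fun a => p a * (q a / α)) lam := by
    have := hint2.div_const α
    exact this.congr (Filter.Eventually.of_forall fun a => by ring)
  -- pointwise identity
  have hpt : ∀ a, p a * Real.log (p a * Z * Real.exp (-q a / α))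
      = p a * Real.log (p a) + p a * Real.log Z - p a * (q a / α) := by
    intro a
    rcases eq_or_lt_of_le (hp0 a) with h | h
    · simp [← h]
    · rw [Real.log_mul (by positivity) (Real.exp_ne_zero _),
        Real.log_mul h.ne' hZpos.ne', Real.log_exp]
      ring
  have hint3 : Integrable (fun a => p a * Real.log Z) lam := hpint.mul_const _
  have hrw : (∫ a, p a * Real.log (p a * Z * Real.exp (-q a / α)) ∂lam)
      = (∫ a, p a * Real.log (p a) ∂lam) + Real.log Z - ∫ a, p a * (q a / α) ∂lam := by
    have hint13 : Integrable (fun a => p a * Real.log (p a) + p a * Real.log Z) lam :=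
      hint1.add hint3
    rw [integral_congr_ae (Filter.Eventually.of_forall hpt),
      integral_sub hint13 hint2', integral_add hint1 hint3,
      integral_mul_const, hp1, one_mul]
  have hrhs : (∫ a, (q a - α * Real.log (p a)) * p a ∂lam)
      = (∫ a, q a * p a ∂lam) - α * ∫ a, p a * Real.log (p a) ∂lam := by
    have : (fun a => (q a - α * Real.log (p a)) * p a)
        = fun a => q a * p a - α * (p a * Real.log (p a)) := by
      funext a; ring
    rw [this, integral_sub hint2 (hint1.const_mul α), integral_const_mul]
  have hq2 : (∫ a, p a * (q a / α) ∂lam) = (∫ a, q a * p a ∂lam) / α := by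
    rw [← integral_div]
    exact integral_congr_ae (Filter.Eventually.of_forall fun a => by ring)
  rw [hrw, hrhs, hq2]
  field_simp
  ring
end

section
/- Let λ be a σ-finite measure on a measurable space A, let α > 0, and let q : A → ℝ be bounded measurable with Z := ∫_A exp(q(a)/α) dλ(a) satisfying 0 < Z < ∞. Then α · log Z = sup over all measurable p : A → [0,∞) with ∫_A p dλ = 1 and ∫_A p · |log p| dλ < ∞ of the quantity ∫_A ( q(a) − α · log p(a) ) · p(a) dλ(a) (convention 0 · log 0 = 0). The supremum is attained by p⋆ := exp(q/α)/Z, and for any admissible p, ∫_A (q − α log p) p dλ = α · log Z if and only if p = p⋆ holds λ-almost everywhere. -/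
open MeasureTheory

/-- A density `p` is an admissible policy density w.r.t. `lam`: measurable, nonnegative,
integrating to one, and with finite entropy integral `∫ p |log p| < ∞`. -/
def Admissible {A : Type*} [MeasurableSpace A] (lam : Measure A) (p : A → ℝ) : Prop :=
  Measurable p ∧ (∀ a, 0 ≤ p a) ∧ Integrable p lam ∧ (∫ a, p a ∂lam = 1) ∧
    Integrable (fun a => p a * |Real.log (p a)|) lam

/-- The entropy-regularized expected value `∫ (q - α log p) p dλ`. -/
noncomputable def gibbsVal {A : Type*} [MeasurableSpace A]
    (lam : Measure A) (α : ℝ) (q p : A → ℝ) : ℝ :=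
  ∫ a, (q a - α * Real.log (p a)) * p a ∂lam

open Real InformationTheory

/-! For an admissible density `p`, since `log p⋆ = q / α - log Z`,
`gibbsVal p = α log Z - α KL(p ‖ p⋆)`, where `KL(p ‖ p⋆) = ∫ (p log p - p log p⋆)`.
As `p` and `p⋆` both have mass one, `KL(p ‖ p⋆) = ∫ (p log p - p log p⋆ - (p - p⋆))`,
whose integrand is `p⋆ · klFun (p / p⋆) ≥ 0`, vanishing exactly where `p = p⋆`. -/

lemma mul_log_sub_mul_log_sub_sub_eq {x y : ℝ} (hy : 0 < y) :
    x * log x - x * log y - (x - y) = y * klFun (x / y) := by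
  rcases eq_or_ne x 0 with rfl | hx
  · simp [klFun]
  · rw [klFun, log_div hx hy.ne']
    field_simp
    ring

lemma mul_log_sub_mul_log_sub_sub_nonneg {x y : ℝ} (hx : 0 ≤ x) (hy : 0 < y) :
    0 ≤ x * log x - x * log y - (x - y) := by
  rw [mul_log_sub_mul_log_sub_sub_eq hy]
  exact mul_nonneg hy.le (klFun_nonneg (div_nonneg hx hy.le))

lemma mul_log_sub_mul_log_sub_sub_eq_zero_iff {x y : ℝ} (hx : 0 ≤ x) (hy : 0 < y) :
    x * log x - x * log y - (x - y) = 0 ↔ x = y := by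
  rw [mul_log_sub_mul_log_sub_sub_eq hy, mul_eq_zero, or_iff_right hy.ne',
    klFun_eq_zero_iff (div_nonneg hx hy.le), div_eq_one_iff_eq hy.ne']

section RelativeEntropy

variable {A : Type*} [MeasurableSpace A] {μ : Measure A} {p r : A → ℝ}

noncomputable def relEntropy (μ : Measure A) (p r : A → ℝ) : ℝ :=
  ∫ a, (p a * log (p a) - p a * log (r a)) ∂μ

lemma relEntropy_eq_integral_sub_sub (hp : Integrable p μ) (hr : Integrable r μ)
    (hpr : ∫ a, p a ∂μ = ∫ a, r a ∂μ)
    (hD : Integrable (fun a => p a * log (p a) - p a * log (r a)) μ) :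
    relEntropy μ p r = ∫ a, (p a * log (p a) - p a * log (r a) - (p a - r a)) ∂μ := by
  have hsub : Integrable (fun a => p a - r a) μ := hp.sub hr
  rw [relEntropy, integral_sub hD hsub, integral_sub hp hr, hpr, sub_self, sub_zero]

lemma relEntropy_nonneg (hp0 : 0 ≤ᵐ[μ] p) (hr0 : ∀ᵐ a ∂μ, 0 < r a) (hp : Integrable p μ)
    (hr : Integrable r μ) (hpr : ∫ a, p a ∂μ = ∫ a, r a ∂μ)
    (hD : Integrable (fun a => p a * log (p a) - p a * log (r a)) μ) :
    0 ≤ relEntropy μ p r := by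
  rw [relEntropy_eq_integral_sub_sub hp hr hpr hD]
  refine integral_nonneg_of_ae ?_
  filter_upwards [hp0, hr0] with a hpa hra
  exact mul_log_sub_mul_log_sub_sub_nonneg hpa hra

lemma relEntropy_eq_zero_iff (hp0 : 0 ≤ᵐ[μ] p) (hr0 : ∀ᵐ a ∂μ, 0 < r a) (hp : Integrable p μ)
    (hr : Integrable r μ) (hpr : ∫ a, p a ∂μ = ∫ a, r a ∂μ)
    (hD : Integrable (fun a => p a * log (p a) - p a * log (r a)) μ) :
    relEntropy μ p r = 0 ↔ p =ᵐ[μ] r := by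
  have hnonneg : 0 ≤ᵐ[μ] fun a => p a * log (p a) - p a * log (r a) - (p a - r a) := by
    filter_upwards [hp0, hr0] with a hpa hra
    exact mul_log_sub_mul_log_sub_sub_nonneg hpa hra
  rw [relEntropy_eq_integral_sub_sub hp hr hpr hD,
    integral_eq_zero_iff_of_nonneg_ae hnonneg (hD.sub (hp.sub hr))]
  refine Filter.eventually_congr ?_
  filter_upwards [hp0, hr0] with a hpa hra
  exact mul_log_sub_mul_log_sub_sub_eq_zero_iff hpa hra

lemma Admissible.relEntropy_nonneg (hp : Admissible μ p) (hr : Admissible μ r)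
    (hr0 : ∀ a, 0 < r a) (hD : Integrable (fun a => p a * log (p a) - p a * log (r a)) μ) :
    0 ≤ relEntropy μ p r :=
  _root_.relEntropy_nonneg (ae_of_all _ hp.2.1) (ae_of_all _ hr0) hp.2.2.1 hr.2.2.1
    (hp.2.2.2.1.trans hr.2.2.2.1.symm) hD

lemma Admissible.relEntropy_eq_zero_iff (hp : Admissible μ p) (hr : Admissible μ r)
    (hr0 : ∀ a, 0 < r a) (hD : Integrable (fun a => p a * log (p a) - p a * log (r a)) μ) :
    relEntropy μ p r = 0 ↔ p =ᵐ[μ] r :=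
  _root_.relEntropy_eq_zero_iff (ae_of_all _ hp.2.1) (ae_of_all _ hr0) hp.2.2.1 hr.2.2.1
    (hp.2.2.2.1.trans hr.2.2.2.1.symm) hD

end RelativeEntropy

section Gibbs

variable {A : Type*} [MeasurableSpace A] {lam : Measure A} {α : ℝ} {q p : A → ℝ}

noncomputable def gibbsDensity (lam : Measure A) (α : ℝ) (q : A → ℝ) : A → ℝ :=
  fun a => exp (q a / α) / ∫ b, exp (q b / α) ∂lam

lemma gibbsDensity_pos (hZ : 0 < ∫ a, exp (q a / α) ∂lam) (a : A) :
    0 < gibbsDensity lam α q a :=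
  div_pos (exp_pos _) hZ

lemma measurable_gibbsDensity (hq : Measurable q) : Measurable (gibbsDensity lam α q) :=
  (hq.div_const α).exp.div_const _

lemma log_gibbsDensity (hZ : ∫ a, exp (q a / α) ∂lam ≠ 0) (a : A) :
    log (gibbsDensity lam α q a) = q a / α - log (∫ b, exp (q b / α) ∂lam) := by
  rw [gibbsDensity, log_div (exp_pos _).ne' hZ, log_exp]

lemma abs_log_gibbsDensity_le {C : ℝ} (hC : ∀ a, |q a| ≤ C)
    (hZ : ∫ a, exp (q a / α) ∂lam ≠ 0) (a : A) :
    |log (gibbsDensity lam α q a)| ≤ C / |α| + |log (∫ b, exp (q b / α) ∂lam)| := by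
  rw [log_gibbsDensity hZ]
  calc |q a / α - log (∫ b, exp (q b / α) ∂lam)|
      ≤ |q a / α| + |log (∫ b, exp (q b / α) ∂lam)| := abs_sub _ _
    _ ≤ C / |α| + |log (∫ b, exp (q b / α) ∂lam)| := by rw [abs_div]; gcongr; exact hC a

lemma admissible_gibbsDensity {C : ℝ} (hq : Measurable q) (hC : ∀ a, |q a| ≤ C)
    (hZint : Integrable (fun a => exp (q a / α)) lam) (hZ : 0 < ∫ a, exp (q a / α) ∂lam) :
    Admissible lam (gibbsDensity lam α q) := by
  have hint : Integrable (gibbsDensity lam α q) lam := hZint.div_const _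
  refine ⟨measurable_gibbsDensity hq, fun a => (gibbsDensity_pos hZ a).le, hint, ?_, ?_⟩
  · simp only [gibbsDensity, integral_div, div_self hZ.ne']
  · refine hint.mul_bdd (measurable_gibbsDensity hq).log.abs.aestronglyMeasurable
      (ae_of_all _ fun a => ((norm_eq_abs _).trans (abs_abs _)).trans_le
        (abs_log_gibbsDensity_le hC hZ.ne' a))

lemma Admissible.integrable_mul_log (hp : Admissible lam p) :
    Integrable (fun a => p a * log (p a)) lam := by
  obtain ⟨hpm, hp0, -, -, hent⟩ := hp
  refine hent.congr' (hpm.mul hpm.log).aestronglyMeasurable (ae_of_all _ fun a => ?_)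
  simp only [norm_mul, norm_eq_abs, abs_abs, abs_of_nonneg (hp0 a)]

lemma Admissible.integrable_relEntropy_gibbsDensity {C : ℝ} (hp : Admissible lam p)
    (hq : Measurable q) (hC : ∀ a, |q a| ≤ C) (hZ : ∫ a, exp (q a / α) ∂lam ≠ 0) :
    Integrable (fun a => p a * log (p a) - p a * log (gibbsDensity lam α q a)) lam :=
  hp.integrable_mul_log.sub <| hp.2.2.1.mul_bdd
    (measurable_gibbsDensity hq).log.aestronglyMeasurable
    (ae_of_all _ fun a => abs_log_gibbsDensity_le hC hZ a)

lemma gibbsVal_eq_mul_log_sub_relEntropy (hα : α ≠ 0) (hp : Admissible lam p)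
    (hZ : ∫ a, exp (q a / α) ∂lam ≠ 0)
    (hD : Integrable (fun a => p a * log (p a) - p a * log (gibbsDensity lam α q a)) lam) :
    gibbsVal lam α q p = α * log (∫ a, exp (q a / α) ∂lam)
      - α * relEntropy lam p (gibbsDensity lam α q) := by
  have hpoint : ∀ a, (q a - α * log (p a)) * p a = α * log (∫ b, exp (q b / α) ∂lam) * p a
      - α * (p a * log (p a) - p a * log (gibbsDensity lam α q a)) := fun a => by
    rw [log_gibbsDensity hZ]
    field_simp
    ring
  simp only [gibbsVal, relEntropy, hpoint]
  rw [integral_sub (hp.2.2.1.const_mul _) (hD.const_mul α), integral_const_mul,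
    integral_const_mul, hp.2.2.2.1, mul_one]

end Gibbs

theorem stmt4_general {A : Type*} [MeasurableSpace A] (lam : Measure A)
    (α : ℝ) (hα : 0 < α)
    (q : A → ℝ) (hq : Measurable q) (hqb : ∃ C : ℝ, ∀ a, |q a| ≤ C)
    (hZint : Integrable (fun a => Real.exp (q a / α)) lam)
    (hZpos : 0 < ∫ a, Real.exp (q a / α) ∂lam) :
    (∀ p : A → ℝ, Admissible lam p →
        gibbsVal lam α q p ≤ α * Real.log (∫ a, Real.exp (q a / α) ∂lam)) ∧
    (Admissible lam (fun a => Real.exp (q a / α) / ∫ b, Real.exp (q b / α) ∂lam) ∧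
      gibbsVal lam α q (fun a => Real.exp (q a / α) / ∫ b, Real.exp (q b / α) ∂lam)
        = α * Real.log (∫ a, Real.exp (q a / α) ∂lam)) ∧
    (∀ p : A → ℝ, Admissible lam p →
        (gibbsVal lam α q p = α * Real.log (∫ a, Real.exp (q a / α) ∂lam) ↔
          p =ᵐ[lam] fun a => Real.exp (q a / α) / ∫ b, Real.exp (q b / α) ∂lam)) := by
  obtain ⟨C, hC⟩ := hqb
  have hstar : Admissible lam (gibbsDensity lam α q) :=
    admissible_gibbsDensity hq hC hZint hZpos
  have hD (p : A → ℝ) (hp : Admissible lam p) :=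
    hp.integrable_relEntropy_gibbsDensity hq hC hZpos.ne'
  have hval (p : A → ℝ) (hp : Admissible lam p) :=
    gibbsVal_eq_mul_log_sub_relEntropy hα.ne' hp hZpos.ne' (hD p hp)
  have hopt (p : A → ℝ) (hp : Admissible lam p) :
      gibbsVal lam α q p = α * log (∫ a, exp (q a / α) ∂lam) ↔ p =ᵐ[lam] gibbsDensity lam α q := by
    rw [hval p hp, sub_eq_self, mul_eq_zero, or_iff_right hα.ne',
      hp.relEntropy_eq_zero_iff hstar (gibbsDensity_pos hZpos) (hD p hp)]
  refine ⟨fun p hp => ?_, ⟨hstar, (hopt _ hstar).2 Filter.EventuallyEq.rfl⟩, hopt⟩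
  rw [hval p hp]
  exact sub_le_self _
    (mul_nonneg hα.le (hp.relEntropy_nonneg hstar (gibbsDensity_pos hZpos) (hD p hp)))

theorem stmt4 {A : Type*} [MeasurableSpace A] (lam : Measure A) [SigmaFinite lam]
    (α : ℝ) (hα : 0 < α)
    (q : A → ℝ) (hq : Measurable q) (hqb : ∃ C : ℝ, ∀ a, |q a| ≤ C)
    (hZint : Integrable (fun a => Real.exp (q a / α)) lam)
    (hZpos : 0 < ∫ a, Real.exp (q a / α) ∂lam) :
    (∀ p : A → ℝ, Admissible lam p →
        gibbsVal lam α q p ≤ α * Real.log (∫ a, Real.exp (q a / α) ∂lam)) ∧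
    (Admissible lam (fun a => Real.exp (q a / α) / ∫ b, Real.exp (q b / α) ∂lam) ∧
      gibbsVal lam α q (fun a => Real.exp (q a / α) / ∫ b, Real.exp (q b / α) ∂lam)
        = α * Real.log (∫ a, Real.exp (q a / α) ∂lam)) ∧
    (∀ p : A → ℝ, Admissible lam p →
        (gibbsVal lam α q p = α * Real.log (∫ a, Real.exp (q a / α) ∂lam) ↔
          p =ᵐ[lam] fun a => Real.exp (q a / α) / ∫ b, Real.exp (q b / α) ∂lam)) :=
  stmt4_general lam α hα q hq hqb hZint hZpos
end

section
/- Let X and A be measurable spaces, β ≥ 0, and let r : X×A → ℝ, V : X → ℝ (composed as a function on X×A via (x,a) ↦ V(x)), and g : X×A → ℝ be bounded measurable. Let (κ_u)_{u∈(0,1]} be a family of Markov kernels from X×A to X and C₂ ≥ 0 such that for all u ∈ (0,1] and all (x,a), | ∫ V dκ_u(x,a) − V(x) − u · g(x,a) | ≤ C₂ · u². Define q_V^u(x,a) := (exp(−βu) · ∫ V dκ_u(x,a) − V(x))/u + r(x,a) and q_V(x,a) := r(x,a) + g(x,a) − β · V(x). Then there exists a constant C, depending only on β, ‖V‖∞,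 ‖g‖∞, and C₂, such that sup_{(x,a)∈X×A} |q_V^u(x,a) − q_V(x,a)| ≤ C · u for all u ∈ (0,1]. -/
open MeasureTheory ProbabilityTheory

/-- The finite-horizon advantage rate
`q_V^u(x,a) = (γ · ∫ V dκ(x,a) − V(x))/u + r(x,a)`. -/
noncomputable def qrate {X A : Type*} [MeasurableSpace X] [MeasurableSpace A]
    (κ : Kernel (X × A) X) (γ u : ℝ) (r : X × A → ℝ) (V : X → ℝ) (p : X × A) : ℝ :=
  (γ * ∫ y, V y ∂(κ p) - V p.1) / u + r p

lemma exp_neg_sub_le (t : ℝ) (ht : 0 ≤ t) : Real.exp (-t) - 1 + t ≤ t^2 := by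
  rcases le_or_gt t 1 with h1 | h1
  · have hb := Real.exp_bound (x := -t) (by rwa [abs_neg, abs_of_nonneg ht]) (n := 2) (by norm_num)
    simp [Finset.sum_range_succ, Nat.factorial] at hb
    rw [abs_le] at hb
    have := hb.2
    nlinarith [abs_nonneg (-t), abs_of_nonneg ht, sq_abs (-t)]
  · have h2 : Real.exp (-t) ≤ 1 := Real.exp_le_one_iff.mpr (by linarith)
    nlinarith


theorem stmt8 {X A : Type*} [MeasurableSpace X] [MeasurableSpace A]
    (β : ℝ) (hβ : 0 ≤ β)
    (r : X × A → ℝ) (hrm : Measurable r) (hrb : ∃ C : ℝ, ∀ p, |r p| ≤ C)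
    (V : X → ℝ) (hVm : Measurable V) (hVb : ∃ C : ℝ, ∀ x, |V x| ≤ C)
    (g : X × A → ℝ) (hgm : Measurable g) (hgb : ∃ C : ℝ, ∀ p, |g p| ≤ C)
    (κ : ℝ → Kernel (X × A) X) (hκ : ∀ u ∈ Set.Ioc (0 : ℝ) 1, IsMarkovKernel (κ u))
    (C₂ : ℝ) (hC₂ : 0 ≤ C₂)
    (hexp : ∀ u ∈ Set.Ioc (0 : ℝ) 1, ∀ p : X × A,
        |(∫ y, V y ∂(κ u p)) - V p.1 - u * g p| ≤ C₂ * u ^ 2) :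
    ∃ C : ℝ, ∀ u ∈ Set.Ioc (0 : ℝ) 1,
      (⨆ p : X × A, |qrate (κ u) (Real.exp (-(β * u))) u r V p
          - (r p + g p - β * V p.1)|) ≤ C * u := by

  obtain ⟨Cv, hCv⟩ := hVb
  obtain ⟨Cg, hCg⟩ := hgb
  set Cv' := max Cv 0 with hCv'
  set Cg' := max Cg 0 with hCg'
  have hCv'0 : 0 ≤ Cv' := le_max_right _ _
  have hCg'0 : 0 ≤ Cg' := le_max_right _ _
  have hCvb : ∀ x, |V x| ≤ Cv' := fun x => le_trans (hCv x) (le_max_left _ _)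
  have hCgb : ∀ p, |g p| ≤ Cg' := fun p => le_trans (hCg p) (le_max_left _ _)
  refine ⟨C₂ + β ^ 2 * Cv' + β * Cg', ?_⟩
  intro u hu
  obtain ⟨hu0, hu1⟩ := hu
  have hune : u ≠ 0 := ne_of_gt hu0
  have hCnn : 0 ≤ (C₂ + β ^ 2 * Cv' + β * Cg') * u := by
    apply mul_nonneg _ hu0.le
    have h1 : 0 ≤ β ^ 2 * Cv' := mul_nonneg (sq_nonneg β) hCv'0
    have h2 : 0 ≤ β * Cg' := mul_nonneg hβ hCg'0
    linarith
  apply Real.iSup_le _ hCnn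
  intro p
  set t := β * u with htdef
  have ht0 : 0 ≤ t := mul_nonneg hβ hu0.le
  set γ := Real.exp (-t) with hγdef
  have hγ0 : 0 < γ := Real.exp_pos _
  have hγ1 : γ ≤ 1 := Real.exp_le_one_iff.mpr (by linarith)
  have h1 : 0 ≤ γ - 1 + t := by
    have := Real.add_one_le_exp (-t)
    rw [← hγdef] at this
    linarith
  have h2 : γ - 1 + t ≤ t ^ 2 := exp_neg_sub_le t ht0
  set I := ∫ y, V y ∂((κ u) p) with hI
  have hE := hexp u ⟨hu0, hu1⟩ p
  rw [← hI] at hE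
  have key : qrate (κ u) γ u r V p - (r p + g p - β * V p.1)
      = γ * (I - V p.1 - u * g p) / u + ((γ - 1 + t) / u) * V p.1 + (γ - 1) * g p := by
    simp only [qrate, ← hI, htdef]
    field_simp
    ring
  rw [key]
  have b1 : |γ * (I - V p.1 - u * g p) / u| ≤ C₂ * u := by
    rw [abs_div, abs_mul, abs_of_pos hγ0, abs_of_pos hu0]
    have step : γ * |I - V p.1 - u * g p| ≤ 1 * (C₂ * u ^ 2) := by
      apply mul_le_mul hγ1 hE (abs_nonneg _) zero_le_one
    calc γ * |I - V p.1 - u * g p| / u ≤ 1 * (C₂ * u ^ 2) / u :=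
          div_le_div_of_nonneg_right step hu0.le |>.trans_eq rfl
      _ = C₂ * u := by field_simp
  have b2 : |((γ - 1 + t) / u) * V p.1| ≤ β ^ 2 * Cv' * u := by
    rw [abs_mul, abs_of_nonneg (div_nonneg h1 hu0.le)]
    have step : (γ - 1 + t) / u * |V p.1| ≤ (t ^ 2 / u) * Cv' := by
      apply mul_le_mul (div_le_div_of_nonneg_right h2 hu0.le) (hCvb _) (abs_nonneg _)
      exact div_nonneg (sq_nonneg t) hu0.le
    refine step.trans (le_of_eq ?_)
    rw [htdef]
    field_simp
  have b3 : |(γ - 1) * g p| ≤ β * Cg' * u := by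
    rw [abs_mul]
    have hab : |γ - 1| ≤ t := by
      rw [abs_le]
      constructor <;> linarith
    have step : |γ - 1| * |g p| ≤ t * Cg' :=
      mul_le_mul hab (hCgb _) (abs_nonneg _) ht0
    refine step.trans (le_of_eq ?_)
    rw [htdef]; ring
  calc |γ * (I - V p.1 - u * g p) / u + ((γ - 1 + t) / u) * V p.1 + (γ - 1) * g p|
      ≤ |γ * (I - V p.1 - u * g p) / u + ((γ - 1 + t) / u) * V p.1| + |(γ - 1) * g p| :=
        abs_add_le _ _
    _ ≤ |γ * (I - V p.1 - u * g p) / u| + |((γ - 1 + t) / u) * V p.1| + |(γ - 1) * g p| := by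
        have := abs_add_le (γ * (I - V p.1 - u * g p) / u) (((γ - 1 + t) / u) * V p.1)
        linarith
    _ ≤ C₂ * u + β ^ 2 * Cv' * u + β * Cg' * u := by linarith
    _ = (C₂ + β ^ 2 * Cv' + β * Cg') * u := by ring
end

section
/- Let X and A be measurable spaces, κ a Markov kernel from X×A to X, π a Markov kernel from X to A, and let ℓ : X×A → ℝ and r : X×A → ℝ be bounded measurable. Fix α ≥ 0, u ≥ 1, τ ∈ [0,1], and γ ∈ [0,1]. For a bounded measurable Q : X×A → ℝ define Q̃ := Q − α·ℓ, m_Q(x) := ∫_A Q̃(x,a) dπ(x)(a), and F(Q)(x,a) := (1−τ)·Q(x,a) + τ·r(x,a) + τ·m_Q(x) + (τ/u)·( γ · ∫_X m_Q dκ(x,a) − m_Q(x) ). Then for all bounded measurable Q, Q' : X×A → ℝ, ‖F(Q) − F(Q')‖∞ ≤ ( 1 − (1−γ)·τ/u ) · ‖Q − Q'‖∞. -/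
/-! The reward cancels in `F(Q) - F(Q')`, and `m_Q - m_{Q'}` and `∫ m_Q dκ - ∫ m_{Q'} dκ` are
averages of `Q - Q'` against probability measures, hence bounded by `‖Q - Q'‖∞`. So `F(Q) - F(Q')`
is a combination of three such terms with nonnegative weights `1 - τ`, `τ - τ/u` (as `u ≥ 1`) and
`τγ/u`, which sum to `1 - (1 - γ)τ/u`. -/

open MeasureTheory ProbabilityTheory

/-- Sup-norm of a real-valued function. -/
noncomputable def supNorm {Z : Type*} (f : Z → ℝ) : ℝ := ⨆ z, |f z|

/-- Policy-averaged entropy-regularized critic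
`m_Q(x) = ∫_A (Q(x,a) − α·ℓ(x,a)) dπ(x)(a)`. -/
noncomputable def mQ {X A : Type*} [MeasurableSpace X] [MeasurableSpace A]
    (π : Kernel X A) (α : ℝ) (ℓ Q : X × A → ℝ) (x : X) : ℝ :=
  ∫ a, (Q (x, a) - α * ℓ (x, a)) ∂(π x)

/-- The single-critic update operator `F_{τ,u}`. -/
noncomputable def Fop {X A : Type*} [MeasurableSpace X] [MeasurableSpace A]
    (κ : Kernel (X × A) X) (π : Kernel X A) (α : ℝ) (ℓ r : X × A → ℝ)
    (τ u γ : ℝ) (Q : X × A → ℝ) (p : X × A) : ℝ :=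
  (1 - τ) * Q p + τ * r p + τ * mQ π α ℓ Q p.1
    + (τ / u) * (γ * (∫ y, mQ π α ℓ Q y ∂(κ p)) - mQ π α ℓ Q p.1)

section supNorm

variable {Z : Type*}

lemma supNorm_nonneg (f : Z → ℝ) : 0 ≤ supNorm f :=
  Real.iSup_nonneg fun _ => abs_nonneg _

lemma abs_le_supNorm {f : Z → ℝ} (hf : BddAbove (Set.range fun z => |f z|)) (z : Z) :
    |f z| ≤ supNorm f :=
  le_ciSup hf z

lemma supNorm_le {f : Z → ℝ} {c : ℝ} (hc : 0 ≤ c) (h : ∀ z, |f z| ≤ c) : supNorm f ≤ c :=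
  Real.iSup_le h hc

lemma bddAbove_abs_sub {f g : Z → ℝ} {C C' : ℝ} (hf : ∀ z, |f z| ≤ C) (hg : ∀ z, |g z| ≤ C') :
    BddAbove (Set.range fun z => |f z - g z|) := by
  refine ⟨C + C', ?_⟩
  rintro _ ⟨z, rfl⟩
  exact (abs_sub _ _).trans (add_le_add (hf z) (hg z))

end supNorm

section probabilityMeasure

variable {Ω : Type*} [MeasurableSpace Ω] {μ : Measure Ω} [IsProbabilityMeasure μ] {f g : Ω → ℝ}

lemma abs_integral_le_of_abs_le {C : ℝ} (h : ∀ ω, |f ω| ≤ C) : |∫ ω, f ω ∂μ| ≤ C := by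
  simpa using norm_integral_le_of_norm_le_const (μ := μ) (f := f) (ae_of_all _ h)

lemma abs_integral_sub_integral_le (hf : Integrable f μ) (hg : Integrable g μ) {c : ℝ}
    (h : ∀ ω, |f ω - g ω| ≤ c) : |∫ ω, f ω ∂μ - ∫ ω, g ω ∂μ| ≤ c := by
  rw [← integral_sub hf hg]
  exact abs_integral_le_of_abs_le h

end probabilityMeasure

lemma abs_mul_add_mul_add_mul_le {a b c x y z N : ℝ} (ha : 0 ≤ a) (hb : 0 ≤ b) (hc : 0 ≤ c)
    (hx : |x| ≤ N) (hy : |y| ≤ N) (hz : |z| ≤ N) :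
    |a * x + b * y + c * z| ≤ (a + b + c) * N := by
  calc |a * x + b * y + c * z| ≤ |a * x| + |b * y| + |c * z| := abs_add_three _ _ _
    _ = a * |x| + b * |y| + c * |z| := by
      rw [abs_mul, abs_mul, abs_mul, abs_of_nonneg ha, abs_of_nonneg hb, abs_of_nonneg hc]
    _ ≤ a * N + b * N + c * N := by gcongr
    _ = (a + b + c) * N := by ring

lemma abs_sub_mul_le {q l α Cq Cl : ℝ} (hq : |q| ≤ Cq) (hl : |l| ≤ Cl) :
    |q - α * l| ≤ Cq + |α| * Cl :=
  calc |q - α * l| ≤ |q| + |α| * |l| := by rw [← abs_mul]; exact abs_sub _ _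
    _ ≤ Cq + |α| * Cl := by gcongr

section mQ

variable {X A : Type*} [MeasurableSpace X] [MeasurableSpace A] (π : Kernel X A) {α : ℝ}
  {ℓ Q Q' : X × A → ℝ} {Cℓ CQ CQ' : ℝ}

lemma measurable_mQ [IsSFiniteKernel π] (hℓ : Measurable ℓ) (hQ : Measurable Q) :
    Measurable (mQ π α ℓ Q) :=
  (hQ.sub (measurable_const.mul hℓ)).stronglyMeasurable.integral_kernel_prod_right'.measurable

variable [IsMarkovKernel π]

lemma integrable_mQ_integrand (hℓ : Measurable ℓ) (hℓb : ∀ p, |ℓ p| ≤ Cℓ) (hQ : Measurable Q)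
    (hQb : ∀ p, |Q p| ≤ CQ) (x : X) :
    Integrable (fun a => Q (x, a) - α * ℓ (x, a)) (π x) :=
  .of_bound ((hQ.sub (measurable_const.mul hℓ)).comp measurable_prodMk_left).aestronglyMeasurable
    _ (ae_of_all _ fun a => abs_sub_mul_le (hQb (x, a)) (hℓb (x, a)))

lemma abs_mQ_le (hℓb : ∀ p, |ℓ p| ≤ Cℓ) (hQb : ∀ p, |Q p| ≤ CQ) (x : X) :
    |mQ π α ℓ Q x| ≤ CQ + |α| * Cℓ :=
  abs_integral_le_of_abs_le fun a => abs_sub_mul_le (hQb (x, a)) (hℓb (x, a))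

lemma integrable_mQ (μ : Measure X) [IsFiniteMeasure μ] (hℓ : Measurable ℓ)
    (hℓb : ∀ p, |ℓ p| ≤ Cℓ) (hQ : Measurable Q) (hQb : ∀ p, |Q p| ≤ CQ) :
    Integrable (mQ π α ℓ Q) μ :=
  .of_bound (measurable_mQ π hℓ hQ).aestronglyMeasurable _ (ae_of_all _ (abs_mQ_le π hℓb hQb))

lemma abs_mQ_sub_mQ_le (hℓ : Measurable ℓ) (hℓb : ∀ p, |ℓ p| ≤ Cℓ) (hQ : Measurable Q)
    (hQb : ∀ p, |Q p| ≤ CQ) (hQ' : Measurable Q') (hQ'b : ∀ p, |Q' p| ≤ CQ') {c : ℝ}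
    (h : ∀ p, |Q p - Q' p| ≤ c) (x : X) :
    |mQ π α ℓ Q x - mQ π α ℓ Q' x| ≤ c :=
  abs_integral_sub_integral_le (integrable_mQ_integrand π hℓ hℓb hQ hQb x)
    (integrable_mQ_integrand π hℓ hℓb hQ' hQ'b x) fun a => by
      simpa only [sub_sub_sub_cancel_right] using h (x, a)

end mQ

section Fop

variable {X A : Type*} [MeasurableSpace X] [MeasurableSpace A] (κ : Kernel (X × A) X)
  (π : Kernel X A) {α : ℝ} {ℓ Q Q' : X × A → ℝ} {Cℓ CQ CQ' : ℝ}

lemma Fop_sub_Fop (r : X × A → ℝ) (τ u γ : ℝ) (p : X × A) :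
    Fop κ π α ℓ r τ u γ Q p - Fop κ π α ℓ r τ u γ Q' p
      = (1 - τ) * (Q p - Q' p) + (τ - τ / u) * (mQ π α ℓ Q p.1 - mQ π α ℓ Q' p.1)
        + (τ * γ / u) * ((∫ y, mQ π α ℓ Q y ∂(κ p)) - ∫ y, mQ π α ℓ Q' y ∂(κ p)) := by
  simp only [Fop]
  ring

lemma abs_Fop_sub_Fop_le [IsMarkovKernel κ] [IsMarkovKernel π] (r : X × A → ℝ) {τ u γ : ℝ}
    (hu : 1 ≤ u) (hτ0 : 0 ≤ τ) (hτ1 : τ ≤ 1) (hγ0 : 0 ≤ γ)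
    (hℓ : Measurable ℓ) (hℓb : ∀ p, |ℓ p| ≤ Cℓ) (hQ : Measurable Q) (hQb : ∀ p, |Q p| ≤ CQ)
    (hQ' : Measurable Q') (hQ'b : ∀ p, |Q' p| ≤ CQ') {N : ℝ} (hN : ∀ p, |Q p - Q' p| ≤ N)
    (p : X × A) :
    |Fop κ π α ℓ r τ u γ Q p - Fop κ π α ℓ r τ u γ Q' p| ≤ (1 - (1 - γ) * τ / u) * N := by
  have hm := abs_mQ_sub_mQ_le (α := α) π hℓ hℓb hQ hQb hQ' hQ'b hN
  have hκ : |(∫ y, mQ π α ℓ Q y ∂(κ p)) - ∫ y, mQ π α ℓ Q' y ∂(κ p)| ≤ N :=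
    abs_integral_sub_integral_le (integrable_mQ π _ hℓ hℓb hQ hQb)
      (integrable_mQ π _ hℓ hℓb hQ' hQ'b) hm
  have hτu : 0 ≤ τ - τ / u := sub_nonneg.2 (div_le_self hτ0 hu)
  rw [Fop_sub_Fop]
  refine (abs_mul_add_mul_add_mul_le (sub_nonneg.2 hτ1) hτu (by positivity) (hN p) (hm p.1)
    hκ).trans_eq ?_
  ring

end Fop

theorem stmt13_general {X A : Type*} [MeasurableSpace X] [MeasurableSpace A]
    (κ : Kernel (X × A) X) [IsMarkovKernel κ]
    (π : Kernel X A) [IsMarkovKernel π]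
    (ℓ r : X × A → ℝ) (hℓm : Measurable ℓ) (hℓb : ∃ C : ℝ, ∀ p, |ℓ p| ≤ C)
    (α : ℝ) (u : ℝ) (hu : 1 ≤ u)
    (τ : ℝ) (hτ0 : 0 ≤ τ) (hτ1 : τ ≤ 1)
    (γ : ℝ) (hγ0 : 0 ≤ γ) :
    ∀ Q Q' : X × A → ℝ, Measurable Q → (∃ C : ℝ, ∀ p, |Q p| ≤ C) →
      Measurable Q' → (∃ C : ℝ, ∀ p, |Q' p| ≤ C) →
      supNorm (fun p => Fop κ π α ℓ r τ u γ Q p - Fop κ π α ℓ r τ u γ Q' p)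
        ≤ (1 - (1 - γ) * τ / u) * supNorm (fun p => Q p - Q' p) := by
  rintro Q Q' hQ ⟨CQ, hQb⟩ hQ' ⟨CQ', hQ'b⟩
  obtain ⟨Cℓ, hℓb⟩ := hℓb
  have hcoef : 0 ≤ 1 - (1 - γ) * τ / u := by
    rw [sub_nonneg, div_le_one (by linarith)]
    nlinarith
  exact supNorm_le (mul_nonneg hcoef (supNorm_nonneg _)) <|
    abs_Fop_sub_Fop_le κ π r hu hτ0 hτ1 hγ0 hℓm hℓb hQ hQb hQ' hQ'b
      (abs_le_supNorm (bddAbove_abs_sub hQb hQ'b))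

theorem stmt13 {X A : Type*} [MeasurableSpace X] [MeasurableSpace A]
    (κ : Kernel (X × A) X) [IsMarkovKernel κ]
    (π : Kernel X A) [IsMarkovKernel π]
    (ℓ r : X × A → ℝ) (hℓm : Measurable ℓ) (hℓb : ∃ C : ℝ, ∀ p, |ℓ p| ≤ C)
    (hrm : Measurable r) (hrb : ∃ C : ℝ, ∀ p, |r p| ≤ C)
    (α : ℝ) (hα : 0 ≤ α) (u : ℝ) (hu : 1 ≤ u)
    (τ : ℝ) (hτ0 : 0 ≤ τ) (hτ1 : τ ≤ 1)
    (γ : ℝ) (hγ0 : 0 ≤ γ) (hγ1 : γ ≤ 1) :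
    ∀ Q Q' : X × A → ℝ, Measurable Q → (∃ C : ℝ, ∀ p, |Q p| ≤ C) →
      Measurable Q' → (∃ C : ℝ, ∀ p, |Q' p| ≤ C) →
      supNorm (fun p => Fop κ π α ℓ r τ u γ Q p - Fop κ π α ℓ r τ u γ Q' p)
        ≤ (1 - (1 - γ) * τ / u) * supNorm (fun p => Q p - Q' p) :=
  stmt13_general κ π ℓ r hℓm hℓb α u hu τ hτ0 hτ1 γ hγ0
end

section
/- Let (D, d) be a metric space and ᾱ ∈ (0,1], and let F : D → D satisfy d(F(Q), F(Q')) ≤ (1−ᾱ) · d(Q, Q') for all Q, Q' ∈ D. Let Q⋆ ∈ D, A ≥ 0, c ≥ 0, ρ̃ ∈ [0,1). Let (Q_k)_{k≥0} be the exact iterates Q_{k+1} := F(Q_k), and assume the bias bound d(Q_k, Q⋆) ≤ A · ρ̃^k + c holds for all k ≥ 0. Let (Q̂_k)_{k≥0} be a sequence in D with Q̂_0 = Q_0 and d(Q̂_{k+1}, F(Q̂_k)) ≤ ζ_k for nonnegative reals ζ_k. Then for every L ≥ 1, Σ_{k=0}^{L−1} d(Q̂_k, Q⋆) ≤ A/(1−ρ̃)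 + L·c + (1/ᾱ) · Σ_{k=0}^{L−1} ζ_k. -/
/-! The gap `e k = d(Q̂_k, Q_k)` obeys `e (k+1) ≤ (1 - ᾱ) e k + ζ k` with `e 0 = 0`; summing this
recursion telescopes to `ᾱ ∑_{k<L} e k ≤ ∑_{k<L} ζ k`. The triangle inequality through `Q_k` then
splits `d(Q̂_k, Q⋆)` into the gap plus the bias bound, whose geometric part sums to at most
`A / (1 - ρ̃)`. -/

open Finset

lemma mul_sum_range_add_le_of_le_one_sub_mul_add {a : ℝ} {e ζ : ℕ → ℝ}
    (h : ∀ k, e (k + 1) ≤ (1 - a) * e k + ζ k) (n : ℕ) :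
    a * ∑ k ∈ range n, e k + e n ≤ e 0 + ∑ k ∈ range n, ζ k := by
  induction n with
  | zero => simp
  | succ n ih =>
    rw [sum_range_succ, sum_range_succ]
    linarith [h n]

lemma sum_range_le_inv_mul_sum_of_le_one_sub_mul_add {a : ℝ} (ha : 0 < a) {e ζ : ℕ → ℝ}
    (he0 : e 0 = 0) (he : ∀ k, 0 ≤ e k) (h : ∀ k, e (k + 1) ≤ (1 - a) * e k + ζ k) (n : ℕ) :
    ∑ k ∈ range n, e k ≤ (1 / a) * ∑ k ∈ range n, ζ k := by
  have := mul_sum_range_add_le_of_le_one_sub_mul_add h n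
  rw [div_mul_eq_mul_div, le_div_iff₀ ha]
  linarith [he n]

lemma geom_sum_range_le_one_div_one_sub {ρ : ℝ} (hρ0 : 0 ≤ ρ) (hρ1 : ρ < 1) (n : ℕ) :
    ∑ k ∈ range n, ρ ^ k ≤ 1 / (1 - ρ) := by
  rw [range_eq_Ico]
  simpa using geom_sum_Ico_le_of_lt_one (m := 0) (n := n) hρ0 hρ1

theorem stmt14_general {D : Type*} [MetricSpace D]
    (alphaBar : ℝ) (h0 : 0 < alphaBar)
    (F : D → D) (hF : ∀ Q Q' : D, dist (F Q) (F Q') ≤ (1 - alphaBar) * dist Q Q')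
    (Qstar : D) (A c ρ : ℝ) (hA : 0 ≤ A) (hρ0 : 0 ≤ ρ) (hρ1 : ρ < 1)
    (Q : ℕ → D) (hQ : ∀ k : ℕ, Q (k + 1) = F (Q k))
    (hbias : ∀ k : ℕ, dist (Q k) Qstar ≤ A * ρ ^ k + c)
    (Qhat : ℕ → D) (hQhat0 : Qhat 0 = Q 0)
    (ζ : ℕ → ℝ)
    (hstat : ∀ k : ℕ, dist (Qhat (k + 1)) (F (Qhat k)) ≤ ζ k) :
    ∀ L : ℕ, 1 ≤ L →
      ∑ k ∈ Finset.range L, dist (Qhat k) Qstar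
        ≤ A / (1 - ρ) + (L : ℝ) * c + (1 / alphaBar) * ∑ k ∈ Finset.range L, ζ k := by
  intro L _
  have hgap : ∑ k ∈ range L, dist (Qhat k) (Q k) ≤ (1 / alphaBar) * ∑ k ∈ range L, ζ k := by
    refine sum_range_le_inv_mul_sum_of_le_one_sub_mul_add h0 (by simp [hQhat0])
      (fun _ ↦ dist_nonneg) (fun k ↦ ?_) L
    rw [hQ k]
    linarith [dist_triangle (Qhat (k + 1)) (F (Qhat k)) (F (Q k)), hF (Qhat k) (Q k), hstat k]
  have hgeom := mul_le_mul_of_nonneg_left (geom_sum_range_le_one_div_one_sub hρ0 hρ1 L) hA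
  calc ∑ k ∈ range L, dist (Qhat k) Qstar
      ≤ ∑ k ∈ range L, (dist (Qhat k) (Q k) + (A * ρ ^ k + c)) :=
        sum_le_sum fun k _ ↦ (dist_triangle _ (Q k) _).trans (by gcongr; exact hbias k)
    _ = ∑ k ∈ range L, dist (Qhat k) (Q k) + A * ∑ k ∈ range L, ρ ^ k + L * c := by
        simp only [sum_add_distrib, ← mul_sum, sum_const, card_range, nsmul_eq_mul, add_assoc]
    _ ≤ A / (1 - ρ) + L * c + (1 / alphaBar) * ∑ k ∈ range L, ζ k := by
        rw [mul_one_div] at hgeom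
        linarith

theorem stmt14 {D : Type*} [MetricSpace D]
    (alphaBar : ℝ) (h0 : 0 < alphaBar) (h1 : alphaBar ≤ 1)
    (F : D → D) (hF : ∀ Q Q' : D, dist (F Q) (F Q') ≤ (1 - alphaBar) * dist Q Q')
    (Qstar : D) (A c ρ : ℝ) (hA : 0 ≤ A) (hc : 0 ≤ c) (hρ0 : 0 ≤ ρ) (hρ1 : ρ < 1)
    (Q : ℕ → D) (hQ : ∀ k : ℕ, Q (k + 1) = F (Q k))
    (hbias : ∀ k : ℕ, dist (Q k) Qstar ≤ A * ρ ^ k + c)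
    (Qhat : ℕ → D) (hQhat0 : Qhat 0 = Q 0)
    (ζ : ℕ → ℝ) (hζ : ∀ k, 0 ≤ ζ k)
    (hstat : ∀ k : ℕ, dist (Qhat (k + 1)) (F (Qhat k)) ≤ ζ k) :
    ∀ L : ℕ, 1 ≤ L →
      ∑ k ∈ Finset.range L, dist (Qhat k) Qstar
        ≤ A / (1 - ρ) + (L : ℝ) * c + (1 / alphaBar) * ∑ k ∈ Finset.range L, ζ k :=
  stmt14_general alphaBar h0 F hF Qstar A c ρ hA hρ0 hρ1 Q hQ hbias Qhat hQhat0 ζ hstat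
end

section
/- Let X and A be measurable spaces, κ a Markov kernel from X×A to X, π a Markov kernel from X to A, and ℓ : X×A → ℝ and r : X×A → ℝ bounded measurable. Fix α ≥ 0, τ ∈ ℝ, β ≥ 0, u > 0, and γ := exp(−βu). Given a bounded measurable V_k : X → ℝ, define: q_k(x,a) := (γ · ∫ V_k dκ(x,a) − V_k(x))/u + r(x,a); Q_k(x,a) := V_k(x) + q_k(x,a); Q̃_k := Q_k − α·ℓ; S_k(x) := ∫_A Q̃_k(x,a) dπ(x)(a); V_{k+1}(x) := (1−τ)·V_k(x) + τ·S_k(x); q_{k+1}(x,a) := (γ · ∫ V_{k+1} dκ(x,a) − V_{k+1}(x))/u + r(x,a); and Q_{k+1}(x,a) := V_{k+1}(x) + q_{k+1}(x,a). Then for all (x,a) ∈ X×A, Q_{k+1}(x,a) = (1−τ)·Q_k(x,a) + τ·r(x,a) + τ·S_k(x) + (τ/u)·( γ · ∫_X S_k dκ(x,a) − S_k(x) ). -/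
open MeasureTheory ProbabilityTheory

private lemma integrable_of_bdd {Z : Type*} [MeasurableSpace Z] {μ : Measure Z}
    [IsFiniteMeasure μ] {f : Z → ℝ} (hm : Measurable f) {C : ℝ} (hb : ∀ z, |f z| ≤ C) :
    Integrable f μ :=
  (integrable_const C).mono' hm.aestronglyMeasurable (Filter.Eventually.of_forall fun z => by
    simpa using hb z)

theorem stmt15 {X A : Type*} [MeasurableSpace X] [MeasurableSpace A]
    (κ : Kernel (X × A) X) [IsMarkovKernel κ]
    (π : Kernel X A) [IsMarkovKernel π]
    (ℓ r : X × A → ℝ) (hℓm : Measurable ℓ) (hℓb : ∃ C : ℝ, ∀ p, |ℓ p| ≤ C)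
    (hrm : Measurable r) (hrb : ∃ C : ℝ, ∀ p, |r p| ≤ C)
    (α : ℝ) (hα : 0 ≤ α) (τ : ℝ) (β : ℝ) (hβ : 0 ≤ β) (u : ℝ) (hu : 0 < u)
    (Vk : X → ℝ) (hVkm : Measurable Vk) (hVkb : ∃ C : ℝ, ∀ x, |Vk x| ≤ C)
    (qk Qk Qtk : X × A → ℝ) (Sk Vk1 : X → ℝ) (qk1 Qk1 : X × A → ℝ)
    (hqk : ∀ p : X × A,
        qk p = (Real.exp (-(β * u)) * (∫ y, Vk y ∂(κ p)) - Vk p.1) / u + r p)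
    (hQk : ∀ p : X × A, Qk p = Vk p.1 + qk p)
    (hQtk : ∀ p : X × A, Qtk p = Qk p - α * ℓ p)
    (hSk : ∀ x : X, Sk x = ∫ a, Qtk (x, a) ∂(π x))
    (hVk1 : ∀ x : X, Vk1 x = (1 - τ) * Vk x + τ * Sk x)
    (hqk1 : ∀ p : X × A,
        qk1 p = (Real.exp (-(β * u)) * (∫ y, Vk1 y ∂(κ p)) - Vk1 p.1) / u + r p)
    (hQk1 : ∀ p : X × A, Qk1 p = Vk1 p.1 + qk1 p) :
    ∀ p : X × A,
      Qk1 p = (1 - τ) * Qk p + τ * r p + τ * Sk p.1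
        + (τ / u) * (Real.exp (-(β * u)) * (∫ y, Sk y ∂(κ p)) - Sk p.1) := by
  obtain ⟨Cℓ, hCℓ⟩ := hℓb
  obtain ⟨Cr, hCr⟩ := hrb
  obtain ⟨CV, hCV⟩ := hVkb
  set γ := Real.exp (-(β * u)) with hγdef
  have hγ1 : γ ≤ 1 := Real.exp_le_one_iff.mpr (by nlinarith)
  have hγ0 : 0 < γ := Real.exp_pos _
  -- measurability of p ↦ ∫ Vk ∂κ p
  have hIV : Measurable fun p : X × A => ∫ y, Vk y ∂(κ p) :=
    ((hVkm.comp measurable_snd).stronglyMeasurable.integral_kernel_prod_right'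
      (κ := κ)).measurable
  have hIVb : ∀ p : X × A, |∫ y, Vk y ∂(κ p)| ≤ CV := fun p => by
    have := norm_integral_le_of_norm_le_const (f := Vk) (μ := κ p) (C := CV)
      (Filter.Eventually.of_forall fun y => by simpa [Real.norm_eq_abs] using hCV y)
    simpa [Real.norm_eq_abs, measure_univ] using this
  -- measurability and bounds for Qtk
  have hqkm : Measurable qk := by
    rw [funext hqk]
    exact (((hIV.const_mul γ).sub (hVkm.comp measurable_fst)).div_const u).add hrm
  have hQkm : Measurable Qk := by
    rw [funext hQk]; exact (hVkm.comp measurable_fst).add hqkm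
  have hQtkm : Measurable Qtk := by
    rw [funext hQtk]; exact hQkm.sub (hℓm.const_mul α)
  set D : ℝ := CV + (CV + CV) / u + Cr + α * Cℓ with hD
  have hQtkb : ∀ p : X × A, |Qtk p| ≤ D := by
    intro p
    have h1 : |qk p| ≤ (CV + CV) / u + Cr := by
      rw [hqk p]
      have hIVp := hIVb p
      have hVp := hCV p.1
      have habs0 : (0:ℝ) ≤ |∫ y, Vk y ∂(κ p)| := abs_nonneg _
      have hγIV : |γ * (∫ y, Vk y ∂(κ p))| ≤ CV := by
        rw [abs_mul, abs_of_pos hγ0]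
        nlinarith
      calc |(γ * (∫ y, Vk y ∂(κ p)) - Vk p.1) / u + r p|
          ≤ |(γ * (∫ y, Vk y ∂(κ p)) - Vk p.1) / u| + |r p| := abs_add_le _ _
        _ ≤ (CV + CV) / u + Cr := by
            have h2 : |(γ * (∫ y, Vk y ∂(κ p)) - Vk p.1)| ≤ CV + CV := by
              calc |(γ * (∫ y, Vk y ∂(κ p)) - Vk p.1)|
                  ≤ |γ * (∫ y, Vk y ∂(κ p))| + |Vk p.1| := abs_sub _ _
                _ ≤ CV + CV := add_le_add hγIV hVp
            rw [abs_div, abs_of_pos hu]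
            exact add_le_add ((div_le_div_iff_of_pos_right hu).mpr h2) (hCr p)
    rw [hQtk p, hQk p]
    calc |Vk p.1 + qk p - α * ℓ p| ≤ |Vk p.1| + |qk p| + |α * ℓ p| := by
          exact (abs_sub _ _).trans (add_le_add_left (abs_add_le _ _) _)
      _ ≤ D := by
          rw [hD, abs_mul, abs_of_nonneg hα]
          have h3 := mul_le_mul_of_nonneg_left (hCℓ p) hα
          linarith [hCV p.1]
  -- Sk measurable and bounded
  have hSkm : Measurable Sk := by
    rw [funext hSk]
    exact (hQtkm.stronglyMeasurable.integral_kernel_prod_right' (κ := π)).measurable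
  have hSkb : ∀ x, |Sk x| ≤ D := fun x => by
    rw [hSk x]
    have := norm_integral_le_of_norm_le_const (f := fun a => Qtk (x, a)) (μ := π x) (C := D)
      (Filter.Eventually.of_forall fun a => by simpa [Real.norm_eq_abs] using hQtkb (x, a))
    simpa [Real.norm_eq_abs, measure_univ] using this
  -- main computation
  intro p
  have hVkint : Integrable Vk (κ p) := integrable_of_bdd hVkm hCV
  have hSkint : Integrable Sk (κ p) := integrable_of_bdd hSkm hSkb
  have hsplit : ∫ y, Vk1 y ∂(κ p)
      = (1 - τ) * (∫ y, Vk y ∂(κ p)) + τ * (∫ y, Sk y ∂(κ p)) := by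
    rw [show (fun y => Vk1 y) = fun y => (1 - τ) * Vk y + τ * Sk y from funext hVk1]
    rw [integral_add (hVkint.const_mul _) (hSkint.const_mul _),
      integral_const_mul, integral_const_mul]
  rw [hQk1 p, hqk1 p, hsplit, hVk1 p.1, hQk p, hqk p]
  field_simp
  ring
end

section
/- Let X and A be measurable spaces, κ and κ' Markov kernels from X×A to X, π a Markov kernel from X to A, and ℓ : X×A → ℝ and r : X×A → ℝ bounded measurable. Fix α ≥ 0, τ ∈ ℝ, β ≥ 0, u > 0, γ := exp(−βu), and γ' := exp(−βu/2). Given a bounded measurable V_k : X → ℝ, define: q̃_k(x,a) := ( 4·γ' · ∫ V_k dκ'(x,a) − γ · ∫ V_k dκ(x,a) − 3·V_k(x) )/u + r(x,a); Q_k(x,a) := V_k(x) + q̃_k(x,a); Q̃_k := Q_k − α·ℓ; S_k(x) := ∫_A Q̃_k(x,a) dπ(x)(a); V_{k+1}(x) := (1−τ)·V_k(x) + τ·S_k(x); q̃_{k+1}(x,a) := ( 4·γ' · ∫ V_{k+1} dκ'(x,a) − γ · ∫ V_{k+1} dκ(x,a) − 3·V_{k+1}(x) )/u + r(x,a); and Q_{k+1}(x,a)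 := V_{k+1}(x) + q̃_{k+1}(x,a). Then for all (x,a) ∈ X×A, Q_{k+1}(x,a) = (1−τ)·Q_k(x,a) + τ·r(x,a) + τ·S_k(x) + (τ/u)·( 4·γ' · ∫_X S_k dκ'(x,a) − γ · ∫_X S_k dκ(x,a) − 3·S_k(x) ). -/
open MeasureTheory ProbabilityTheory

theorem stmt16 {X A : Type*} [MeasurableSpace X] [MeasurableSpace A]
    (κ κ' : Kernel (X × A) X) [IsMarkovKernel κ] [IsMarkovKernel κ']
    (π : Kernel X A) [IsMarkovKernel π]
    (ℓ r : X × A → ℝ) (hℓm : Measurable ℓ) (hℓb : ∃ C : ℝ, ∀ p, |ℓ p| ≤ C)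
    (hrm : Measurable r) (hrb : ∃ C : ℝ, ∀ p, |r p| ≤ C)
    (α : ℝ) (hα : 0 ≤ α) (τ : ℝ) (β : ℝ) (hβ : 0 ≤ β) (u : ℝ) (hu : 0 < u)
    (Vk : X → ℝ) (hVkm : Measurable Vk) (hVkb : ∃ C : ℝ, ∀ x, |Vk x| ≤ C)
    (qtk Qk Qtk : X × A → ℝ) (Sk Vk1 : X → ℝ) (qtk1 Qk1 : X × A → ℝ)
    (hqtk : ∀ p : X × A,
        qtk p = (4 * Real.exp (-(β * u / 2)) * (∫ y, Vk y ∂(κ' p))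
            - Real.exp (-(β * u)) * (∫ y, Vk y ∂(κ p)) - 3 * Vk p.1) / u + r p)
    (hQk : ∀ p : X × A, Qk p = Vk p.1 + qtk p)
    (hQtk : ∀ p : X × A, Qtk p = Qk p - α * ℓ p)
    (hSk : ∀ x : X, Sk x = ∫ a, Qtk (x, a) ∂(π x))
    (hVk1 : ∀ x : X, Vk1 x = (1 - τ) * Vk x + τ * Sk x)
    (hqtk1 : ∀ p : X × A,
        qtk1 p = (4 * Real.exp (-(β * u / 2)) * (∫ y, Vk1 y ∂(κ' p))
            - Real.exp (-(β * u)) * (∫ y, Vk1 y ∂(κ p)) - 3 * Vk1 p.1) / u + r p)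
    (hQk1 : ∀ p : X × A, Qk1 p = Vk1 p.1 + qtk1 p) :
    ∀ p : X × A,
      Qk1 p = (1 - τ) * Qk p + τ * r p + τ * Sk p.1
        + (τ / u) * (4 * Real.exp (-(β * u / 2)) * (∫ y, Sk y ∂(κ' p))
            - Real.exp (-(β * u)) * (∫ y, Sk y ∂(κ p)) - 3 * Sk p.1) := by
  obtain ⟨Cℓ, hCℓ⟩ := hℓb
  obtain ⟨Cr, hCr⟩ := hrb
  obtain ⟨CV, hCV⟩ := hVkb
  set γ' := Real.exp (-(β * u / 2)) with hγ'
  set γ := Real.exp (-(β * u)) with hγ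
  have hγ'pos : (0:ℝ) < γ' := Real.exp_pos _
  have hγpos : (0:ℝ) < γ := Real.exp_pos _
  -- bounds on kernel integrals of Vk
  have hIVκ : ∀ q : X × A, |∫ y, Vk y ∂(κ q)| ≤ CV := fun q => by
    calc |∫ y, Vk y ∂(κ q)| = ‖∫ y, Vk y ∂(κ q)‖ := (Real.norm_eq_abs _).symm
      _ ≤ CV * ((κ q) Set.univ).toReal :=
        norm_integral_le_of_norm_le_const (ae_of_all _ fun y => by
          rw [Real.norm_eq_abs]; exact hCV y)
      _ = CV := by simp
  have hIVκ' : ∀ q : X × A, |∫ y, Vk y ∂(κ' q)| ≤ CV := fun q => by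
    calc |∫ y, Vk y ∂(κ' q)| = ‖∫ y, Vk y ∂(κ' q)‖ := (Real.norm_eq_abs _).symm
      _ ≤ CV * ((κ' q) Set.univ).toReal :=
        norm_integral_le_of_norm_le_const (ae_of_all _ fun y => by
          rw [Real.norm_eq_abs]; exact hCV y)
      _ = CV := by simp
  -- measurability of kernel integrals of Vk
  have hVsm : StronglyMeasurable fun q : (X × A) × X => Vk q.2 :=
    (hVkm.comp measurable_snd).stronglyMeasurable
  have h1 : Measurable fun q : X × A => ∫ y, Vk y ∂(κ' q) :=
    hVsm.integral_kernel_prod_right'.measurable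
  have h2 : Measurable fun q : X × A => ∫ y, Vk y ∂(κ q) :=
    hVsm.integral_kernel_prod_right'.measurable
  -- Qtk measurable and bounded
  have hQtkm : Measurable Qtk := by
    have hfe : Qtk = fun q => (Vk q.1 + ((4 * γ' * (∫ y, Vk y ∂(κ' q))
        - γ * (∫ y, Vk y ∂(κ q)) - 3 * Vk q.1) / u + r q)) - α * ℓ q := by
      funext q; rw [hQtk q, hQk q, hqtk q]
    rw [hfe]
    exact ((hVkm.comp measurable_fst).add
      (((((h1.const_mul _).sub (h2.const_mul _)).sub
        ((hVkm.comp measurable_fst).const_mul 3)).div_const u).add hrm)).sub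
      (hℓm.const_mul α)
  set M : ℝ := CV + ((4 * γ' * CV + γ * CV + 3 * CV) / u + Cr) + α * Cℓ with hM
  have hQtkb : ∀ q, |Qtk q| ≤ M := by
    intro q
    rw [hQtk q, hQk q, hqtk q]
    have h3 : |3 * Vk q.1| ≤ 3 * CV := by
      rw [abs_mul]
      have : |(3:ℝ)| = 3 := by norm_num
      rw [this]; exact mul_le_mul_of_nonneg_left (hCV q.1) (by norm_num)
    have h4 : |4 * γ' * (∫ y, Vk y ∂(κ' q))| ≤ 4 * γ' * CV := by
      rw [abs_mul, abs_of_pos (by positivity : (0:ℝ) < 4 * γ')]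
      exact mul_le_mul_of_nonneg_left (hIVκ' q) (by positivity)
    have h5 : |γ * (∫ y, Vk y ∂(κ q))| ≤ γ * CV := by
      rw [abs_mul, abs_of_pos hγpos]
      exact mul_le_mul_of_nonneg_left (hIVκ q) (by positivity)
    have tri : ∀ a b c : ℝ, |a - b - c| ≤ |a| + |b| + |c| := fun a b c =>
      (abs_sub _ _).trans (add_le_add (abs_sub a b) le_rfl)
    have tri2 : ∀ a b c : ℝ, |a + b - c| ≤ |a| + |b| + |c| := fun a b c =>
      (abs_sub _ _).trans (add_le_add (abs_add_le a b) le_rfl)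
    have hnum : |4 * γ' * (∫ y, Vk y ∂(κ' q)) - γ * (∫ y, Vk y ∂(κ q)) - 3 * Vk q.1|
        ≤ 4 * γ' * CV + γ * CV + 3 * CV :=
      (tri _ _ _).trans (add_le_add (add_le_add h4 h5) h3)
    have hdiv : |(4 * γ' * (∫ y, Vk y ∂(κ' q)) - γ * (∫ y, Vk y ∂(κ q)) - 3 * Vk q.1) / u|
        ≤ (4 * γ' * CV + γ * CV + 3 * CV) / u := by
      rw [abs_div, abs_of_pos hu]; gcongr
    have hαℓ : |α * ℓ q| ≤ α * Cℓ := by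
      rw [abs_mul, abs_of_nonneg hα]
      exact mul_le_mul_of_nonneg_left (hCℓ q) hα
    calc |Vk q.1 + ((4 * γ' * (∫ y, Vk y ∂(κ' q)) - γ * (∫ y, Vk y ∂(κ q))
            - 3 * Vk q.1) / u + r q) - α * ℓ q|
        ≤ |Vk q.1| + |(4 * γ' * (∫ y, Vk y ∂(κ' q)) - γ * (∫ y, Vk y ∂(κ q))
            - 3 * Vk q.1) / u + r q| + |α * ℓ q| := tri2 _ _ _
      _ ≤ |Vk q.1| + (|(4 * γ' * (∫ y, Vk y ∂(κ' q)) - γ * (∫ y, Vk y ∂(κ q))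
            - 3 * Vk q.1) / u| + |r q|) + |α * ℓ q| :=
          add_le_add (add_le_add le_rfl (abs_add_le _ _)) le_rfl
      _ ≤ M := by
          rw [hM]
          exact add_le_add (add_le_add (hCV q.1) (add_le_add hdiv (hCr q))) hαℓ
  -- Sk measurable and bounded
  have hSkfe : Sk = fun x => ∫ a, Qtk (x, a) ∂(π x) := funext hSk
  have hSkm : Measurable Sk := by
    rw [hSkfe]
    exact (hQtkm.stronglyMeasurable).integral_kernel_prod_right'.measurable
  have hSkb : ∀ x, |Sk x| ≤ M := fun x => by
    rw [hSk x]
    calc |∫ a, Qtk (x, a) ∂(π x)| = ‖∫ a, Qtk (x, a) ∂(π x)‖ := (Real.norm_eq_abs _).symm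
      _ ≤ M * ((π x) Set.univ).toReal :=
        norm_integral_le_of_norm_le_const (ae_of_all _ fun a => by
          rw [Real.norm_eq_abs]; exact hQtkb (x, a))
      _ = M := by simp
  -- integrability
  have hintVκ : ∀ q : X × A, Integrable Vk (κ q) := fun q =>
    (integrable_const CV).mono' hVkm.aestronglyMeasurable
      (ae_of_all _ fun y => hCV y)
  have hintVκ' : ∀ q : X × A, Integrable Vk (κ' q) := fun q =>
    (integrable_const CV).mono' hVkm.aestronglyMeasurable
      (ae_of_all _ fun y => hCV y)
  have hintSκ : ∀ q : X × A, Integrable Sk (κ q) := fun q =>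
    (integrable_const M).mono' hSkm.aestronglyMeasurable
      (ae_of_all _ fun y => hSkb y)
  have hintSκ' : ∀ q : X × A, Integrable Sk (κ' q) := fun q =>
    (integrable_const M).mono' hSkm.aestronglyMeasurable
      (ae_of_all _ fun y => hSkb y)
  -- linearity of integrals of Vk1
  have hVk1fe : Vk1 = fun y => (1 - τ) * Vk y + τ * Sk y := funext hVk1
  have keyκ : ∀ q : X × A, ∫ y, Vk1 y ∂(κ q)
      = (1 - τ) * (∫ y, Vk y ∂(κ q)) + τ * (∫ y, Sk y ∂(κ q)) := fun q => by
    rw [hVk1fe, integral_add ((hintVκ q).const_mul _) ((hintSκ q).const_mul _),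
      integral_const_mul, integral_const_mul]
  have keyκ' : ∀ q : X × A, ∫ y, Vk1 y ∂(κ' q)
      = (1 - τ) * (∫ y, Vk y ∂(κ' q)) + τ * (∫ y, Sk y ∂(κ' q)) := fun q => by
    rw [hVk1fe, integral_add ((hintVκ' q).const_mul _) ((hintSκ' q).const_mul _),
      integral_const_mul, integral_const_mul]
  intro p
  rw [hQk1 p, hqtk1 p, keyκ p, keyκ' p, hVk1 p.1, hQk p, hqtk p]
  field_simp
  ring
end

section
/- Let m ≥ 1 and let ν be a measure on ℝ^m such that ν(E) ≥ ν_min · vol(E) for every measurable set E ⊆ ℝ^m, where ν_min > 0 and vol denotes Lebesgue measure. Let g : ℝ^m → ℝ be a bounded Lipschitz function with Lipschitz constant L_g > 0 (with respect to the Euclidean metric), and suppose ∫_{ℝ^m} g(z)² dν(z) ≤ ε² for some ε ≥ 0. Then sup_{z∈ℝ^m} |g(z)| ≤ ( 2^{m+2} · L_g^m / ( ν_min · c_m ) )^{1/(m+2)} · ε^{2/(m+2)}, where c_m denotes the Lebesgue volume of the unit ball in ℝ^m. -/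
open MeasureTheory

theorem stmt18 (m : ℕ) (hm : 1 ≤ m)
    (ν : Measure (EuclideanSpace ℝ (Fin m)))
    (νmin : ℝ) (hνmin : 0 < νmin)
    (hν : ∀ E : Set (EuclideanSpace ℝ (Fin m)), MeasurableSet E →
        ENNReal.ofReal νmin * volume E ≤ ν E)
    (g : EuclideanSpace ℝ (Fin m) → ℝ)
    (hgb : ∃ C : ℝ, ∀ z, |g z| ≤ C)
    (Lg : ℝ) (hLg : 0 < Lg)
    (hlip : ∀ z z' : EuclideanSpace ℝ (Fin m), |g z - g z'| ≤ Lg * dist z z')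
    (ε : ℝ) (hε : 0 ≤ ε)
    (hL2 : ∫⁻ z, ENNReal.ofReal ((g z) ^ 2) ∂ν ≤ ENNReal.ofReal (ε ^ 2)) :
    (⨆ z, |g z|)
      ≤ ((2 : ℝ) ^ (m + 2) * Lg ^ m
            / (νmin * (volume (Metric.ball (0 : EuclideanSpace ℝ (Fin m)) 1)).toReal))
          ^ (1 / (m + 2 : ℝ)) * ε ^ (2 / (m + 2 : ℝ)) := by
  haveI : Nontrivial (EuclideanSpace ℝ (Fin m)) :=
    Module.nontrivial_of_finrank_pos (R := ℝ) (by rw [finrank_euclideanSpace_fin]; omega)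
  set c : ℝ := (volume (Metric.ball (0 : EuclideanSpace ℝ (Fin m)) 1)).toReal with hcdef
  have hV0 : volume (Metric.ball (0 : EuclideanSpace ℝ (Fin m)) 1) ≠ 0 :=
    (Metric.measure_ball_pos _ _ one_pos).ne'
  have hVtop : volume (Metric.ball (0 : EuclideanSpace ℝ (Fin m)) 1) ≠ ⊤ :=
    measure_ball_lt_top.ne
  have hcpos : 0 < c := ENNReal.toReal_pos hV0 hVtop
  have hgmeas : Measurable g := by
    have hlipW : LipschitzWith (Real.toNNReal Lg) g :=
      LipschitzWith.of_dist_le_mul fun a b => by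
        rw [Real.dist_eq, Real.coe_toNNReal _ hLg.le]; exact hlip a b
    exact hlipW.continuous.measurable
  refine ciSup_le fun z => ?_
  set M : ℝ := |g z| with hMdef
  rcases (abs_nonneg (g z)).eq_or_lt with h0 | hM
  · exact le_trans (le_of_eq (hMdef.trans h0.symm)) (by positivity)
  · set r : ℝ := M / (2 * Lg) with hrdef
    have hr : 0 < r := div_pos hM (by positivity)
    have hlow : ∀ w ∈ Metric.ball z r,
        ENNReal.ofReal (M ^ 2 / 4) ≤ ENNReal.ofReal ((g w) ^ 2) := by
      intro w hw
      apply ENNReal.ofReal_le_ofReal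
      have h1 : |g z| - |g w| ≤ Lg * dist z w :=
        le_trans (abs_sub_abs_le_abs_sub _ _) (hlip z w)
      have h2 : Lg * dist z w ≤ Lg * r := by
        have hd : dist z w ≤ r := by
          rw [dist_comm]; exact (Metric.mem_ball.mp hw).le
        exact mul_le_mul_of_nonneg_left hd hLg.le
      have h3 : Lg * r = M / 2 := by
        rw [hrdef]; field_simp
      have h4 : M / 2 ≤ |g w| := by
        rw [← hMdef] at h1; linarith
      calc M ^ 2 / 4 = (M / 2) ^ 2 := by ring
        _ ≤ |g w| ^ 2 := pow_le_pow_left₀ (by positivity) h4 2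
        _ = (g w) ^ 2 := sq_abs _
    have key : ENNReal.ofReal (M ^ 2 / 4) * ν (Metric.ball z r) ≤ ENNReal.ofReal (ε ^ 2) :=
      calc ENNReal.ofReal (M ^ 2 / 4) * ν (Metric.ball z r)
          = ∫⁻ _ in Metric.ball z r, ENNReal.ofReal (M ^ 2 / 4) ∂ν :=
            (setLIntegral_const _ _).symm
        _ ≤ ∫⁻ w in Metric.ball z r, ENNReal.ofReal ((g w) ^ 2) ∂ν :=
            setLIntegral_mono (by measurability) hlow
        _ ≤ ∫⁻ w, ENNReal.ofReal ((g w) ^ 2) ∂ν := setLIntegral_le_lintegral _ _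
        _ ≤ ENNReal.ofReal (ε ^ 2) := hL2
    have hvol : volume (Metric.ball z r)
        = ENNReal.ofReal (r ^ m) * volume (Metric.ball (0 : EuclideanSpace ℝ (Fin m)) 1) := by
      rw [Measure.addHaar_ball _ _ hr.le, finrank_euclideanSpace_fin]
    have big : ENNReal.ofReal (M ^ 2 / 4) *
        (ENNReal.ofReal νmin * (ENNReal.ofReal (r ^ m) *
          volume (Metric.ball (0 : EuclideanSpace ℝ (Fin m)) 1))) ≤ ENNReal.ofReal (ε ^ 2) := by
      rw [← hvol]
      exact le_trans (mul_le_mul_right (hν _ measurableSet_ball) _) key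
    have real_ineq : M ^ 2 / 4 * (νmin * (r ^ m * c)) ≤ ε ^ 2 := by
      have hb := ENNReal.toReal_mono ENNReal.ofReal_ne_top big
      rw [ENNReal.toReal_mul, ENNReal.toReal_mul, ENNReal.toReal_mul,
          ENNReal.toReal_ofReal (by positivity : (0:ℝ) ≤ M ^ 2 / 4),
          ENNReal.toReal_ofReal hνmin.le,
          ENNReal.toReal_ofReal (by positivity : (0:ℝ) ≤ r ^ m),
          ENNReal.toReal_ofReal (by positivity : (0:ℝ) ≤ ε ^ 2)] at hb
      exact hb
    have hrm : r ^ m = M ^ m / (2 ^ m * Lg ^ m) := by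
      rw [hrdef, div_pow, mul_pow]
    have hpow : M ^ (m + 2) ≤ (2 : ℝ) ^ (m + 2) * Lg ^ m / (νmin * c) * ε ^ 2 := by
      rw [div_mul_eq_mul_div, le_div_iff₀ (by positivity)]
      rw [hrm] at real_ineq
      have hT : (0:ℝ) < 2 ^ m * Lg ^ m := by positivity
      calc M ^ (m + 2) * (νmin * c)
          = (M ^ 2 / 4 * (νmin * (M ^ m / (2 ^ m * Lg ^ m) * c))) * (4 * (2 ^ m * Lg ^ m)) := by
            rw [pow_add]; field_simp
        _ ≤ ε ^ 2 * (4 * (2 ^ m * Lg ^ m)) :=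
            mul_le_mul_of_nonneg_right real_ineq (by positivity)
        _ = 2 ^ (m + 2) * Lg ^ m * ε ^ 2 := by rw [pow_add]; ring
    have hMnn : (0:ℝ) ≤ M := hM.le
    have he : (0:ℝ) < (m : ℝ) + 2 := by positivity
    have hstep : M = (M ^ (m + 2)) ^ (1 / ((m : ℝ) + 2)) := by
      rw [← Real.rpow_natCast M (m + 2), ← Real.rpow_mul hMnn]
      push_cast
      rw [mul_one_div, div_self he.ne', Real.rpow_one]
    rw [hstep]
    calc (M ^ (m + 2)) ^ (1 / ((m : ℝ) + 2))
        ≤ ((2 : ℝ) ^ (m + 2) * Lg ^ m / (νmin * c) * ε ^ 2) ^ (1 / ((m : ℝ) + 2)) :=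
          Real.rpow_le_rpow (by positivity) hpow (by positivity)
      _ = ((2 : ℝ) ^ (m + 2) * Lg ^ m / (νmin * c)) ^ (1 / ((m : ℝ) + 2)) *
            (ε ^ 2) ^ (1 / ((m : ℝ) + 2)) :=
          Real.mul_rpow (by positivity) (by positivity)
      _ = ((2 : ℝ) ^ (m + 2) * Lg ^ m / (νmin * c)) ^ (1 / ((m : ℝ) + 2)) *
            ε ^ (2 / ((m : ℝ) + 2)) := by
          rw [← Real.rpow_natCast ε 2, ← Real.rpow_mul hε]
          congr 1
          push_cast
          ring
end
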